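/- Let n ≥ 2. For every 1 ≤ i ≤ n, the determinant of the leading principal i×i submatrix of M (formed by its first i rows and columns) equals (1/5)·(1/7)^{i−1}. -/

import Mathlib

/-- The tridiagonal matrix `M` (of size `(n+1) × (n+1)`). -/
noncomputable def Mmat (n : ℕ) : Matrix (Fin (n+1)) (Fin (n+1)) ℝ :=
  Matrix.of fun i j =>
    if i = j then (if i.val = 0 ∨ i.val = n then 1/5 else 2/7)
    else if i.val + 1 = j.val ∨ j.val + 1 = i.val then
      (if min i.val j.val = 0 ∨ max i.val j.val = n then -(1/Real.sqrt 35) else -(1/7))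
    else 0

/-!
For `i ≤ n` the leading `i × i` block of `M` misses the last row and column, so it is the
symmetric tridiagonal matrix with diagonal `1/5, 2/7, …, 2/7` and off-diagonal
`-1/√35, -1/7, …, -1/7`. It has the Cholesky factorisation `UᵀU` with `U` upper bidiagonal,
diagonal `1/√5, 1/√7, …, 1/√7` and superdiagonal `-1/√7`; as `U` is triangular, the minor is
`(det U)² = (1/5)(1/7)^(i-1)`.
-/

namespace Matrix

variable {R : Type*} [CommRing R]

def upperBidiagonal (d e : ℕ → R) (i : ℕ) : Matrix (Fin i) (Fin i) R :=
  of fun j k => if j = k then d j else if (j : ℕ) + 1 = k then e j else 0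

def symmTridiagonal (a b : ℕ → R) (i : ℕ) : Matrix (Fin i) (Fin i) R :=
  of fun j k =>
    if j = k then a j else if (j : ℕ) + 1 = k then b j else if (k : ℕ) + 1 = j then b k else 0

theorem upperBidiagonal_apply (d e : ℕ → R) {i : ℕ} (j k : Fin i) :
    upperBidiagonal d e i j k =
      (if (j : ℕ) = k then d j else 0) + (if (j : ℕ) + 1 = k then e j else 0) := by
  simp only [upperBidiagonal, of_apply, Fin.ext_iff]
  split_ifs <;> first | omega | simp

theorem det_upperBidiagonal (d e : ℕ → R) (i : ℕ) :
    (upperBidiagonal d e i).det = ∏ j : Fin i, d j := by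
  refine (det_of_isUpperTriangular fun j k hkj => ?_).trans ?_
  · have : (k : ℕ) < j := hkj
    simp only [upperBidiagonal, of_apply, Fin.ext_iff]
    rw [if_neg (by omega), if_neg (by omega)]
  · simp [upperBidiagonal]

theorem transpose_upperBidiagonal_mul_self (d e : ℕ → R) (i : ℕ) :
    (upperBidiagonal d e i)ᵀ * upperBidiagonal d e i =
      symmTridiagonal (fun j => d j ^ 2 + if j = 0 then 0 else e (j - 1) ^ 2)
        (fun j => d j * e j) i := by
  ext ⟨a, ha⟩ ⟨b, hb⟩
  simp only [mul_apply, transpose_apply, upperBidiagonal_apply]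
  rw [Fin.sum_univ_eq_sum_range fun m =>
    ((if m = a then d m else 0) + (if m + 1 = a then e m else 0)) *
      ((if m = b then d m else 0) + (if m + 1 = b then e m else 0))]
  -- Column `a` is supported on rows `a - 1` and `a`: splitting `a` and `b` into zero and
  -- successor turns every condition `m + 1 = _` into one that `Finset.sum_ite_eq'` resolves.
  cases a <;> cases b <;>
    simp only [symmTridiagonal, of_apply, Fin.mk.injEq, Nat.add_eq_zero_iff, one_ne_zero, and_false,
      and_self, ↓reduceIte, Nat.add_right_cancel_iff, Nat.right_eq_add, add_tsub_cancel_right,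
      add_zero, zero_add, mul_add, add_mul, mul_ite, ite_mul, zero_mul, mul_zero, sq,
      Finset.sum_add_distrib, Finset.sum_ite_eq', Finset.mem_range, ha, hb] <;>
    split_ifs <;> first | omega | (subst_vars; ring)

end Matrix

open Matrix Real

theorem Mmat_submatrix_castLE {n i : ℕ} (hi : i ≤ n) :
    (Mmat n).submatrix (Fin.castLE (Nat.le_succ_of_le hi)) (Fin.castLE (Nat.le_succ_of_le hi)) =
      symmTridiagonal (fun j => if j = 0 then 1 / 5 else 2 / 7)
        (fun j => if j = 0 then -(1 / √35) else -(1 / 7)) i := by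
  ext j k
  have := j.isLt
  have := k.isLt
  simp only [Mmat, symmTridiagonal, submatrix_apply, of_apply, Fin.ext_iff, Fin.val_castLE]
  split_ifs <;> first | rfl | omega

noncomputable def mmatCholeskyFactor (i : ℕ) : Matrix (Fin i) (Fin i) ℝ :=
  upperBidiagonal (fun j => if j = 0 then 1 / √5 else 1 / √7) (fun _ => -(1 / √7)) i

theorem transpose_mmatCholeskyFactor_mul_self (i : ℕ) :
    (mmatCholeskyFactor i)ᵀ * mmatCholeskyFactor i =
      symmTridiagonal (fun j => if j = 0 then 1 / 5 else 2 / 7)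
        (fun j => if j = 0 then -(1 / √35) else -(1 / 7)) i := by
  have h5 : √5 ^ 2 = 5 := sq_sqrt (by norm_num)
  have h7 : √7 ^ 2 = 7 := sq_sqrt (by norm_num)
  rw [mmatCholeskyFactor, transpose_upperBidiagonal_mul_self]
  congr 1 <;> funext j <;> rcases j with _ | j <;>
    simp only [↓reduceIte, Nat.add_one_ne_zero, add_zero]
  · rw [div_pow, h5]; norm_num
  · rw [neg_sq, div_pow, h7]; norm_num
  · rw [show (35 : ℝ) = 5 * 7 by norm_num, sqrt_mul (by norm_num)]; ring
  · rw [mul_neg, ← sq, div_pow, h7]; norm_num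

theorem det_mmatCholeskyFactor (m : ℕ) :
    (mmatCholeskyFactor (m + 1)).det = 1 / √5 * (1 / √7) ^ m := by
  simp [mmatCholeskyFactor, det_upperBidiagonal, Fin.prod_univ_succ]

theorem det_leading_principal_submatrix_Mmat (n : ℕ)
    (i : ℕ) (h1 : 1 ≤ i) (h2 : i ≤ n) :
    ((Mmat n).submatrix (Fin.castLE (show i ≤ n + 1 by omega))
        (Fin.castLE (show i ≤ n + 1 by omega))).det
      = (1/5) * (1/7)^(i-1) := by
  obtain ⟨m, rfl⟩ : ∃ m, i = m + 1 := ⟨i - 1, by omega⟩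
  have one_div_sqrt_sq (x : ℝ) (hx : 0 ≤ x) : (1 / √x) ^ 2 = 1 / x := by
    rw [div_pow, one_pow, sq_sqrt hx]
  rw [Mmat_submatrix_castLE h2, ← transpose_mmatCholeskyFactor_mul_self, det_mul, det_transpose,
    det_mmatCholeskyFactor, ← sq, mul_pow, pow_right_comm, one_div_sqrt_sq 5 (by norm_num),
    one_div_sqrt_sq 7 (by norm_num), Nat.add_sub_cancel]
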